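/- Let H and H' be real Hilbert spaces, K : H → H' a bounded linear operator with operator norm strictly less than 1, g ∈ H', p ∈ [1,2], (φ_γ)_{γ∈Γ} an orthonormal basis of H, and w = (w_γ)_{γ∈Γ} a sequence of weights with w_γ ≥ c for some c > 0. Let fⁿ = S_{w,p}(fⁿ⁻¹ + K*(g − K fⁿ⁻¹)) be the iterates starting from some f⁰ ∈ H, suppose the fⁿ converge weakly to f* ∈ H, and set uⁿ = fⁿ − f*. Then ‖K uⁿ‖ → 0 as n → ∞. -/

import Mathlib

open scoped ENNReal
open Filter


open scoped ENNReal
open Filter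

lemma rpow_tangent_nonneg {p : ℝ} (hp : 1 ≤ p) {a : ℝ} (ha : 0 < a) (b : ℝ) (hb : 0 ≤ b) :
    a ^ p + p * a ^ (p - 1) * (b - a) ≤ b ^ p := by
  have hs : -1 ≤ (b - a) / a := by
    rw [le_div_iff₀ ha]; linarith
  have hber := one_add_mul_self_le_rpow_one_add hs hp
  have h1 : 1 + (b - a) / a = b / a := by field_simp; ring
  rw [h1, Real.div_rpow hb ha.le] at hber
  have hap : (0:ℝ) < a ^ p := Real.rpow_pos_of_pos ha p
  have key : a ^ p * (1 + p * ((b - a) / a)) ≤ b ^ p := by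
    calc a ^ p * (1 + p * ((b-a)/a)) ≤ a ^ p * (b ^ p / a ^ p) :=
          mul_le_mul_of_nonneg_left hber hap.le
    _ = b ^ p := by field_simp
  have hpa : a ^ (p-1) * a = a ^ p := by
    rw [← Real.rpow_add_one ha.ne' (p-1)]; ring_nf
  calc a ^ p + p * a ^ (p-1) * (b - a) = a ^ p * (1 + p * ((b - a) / a)) := by
        field_simp; linear_combination p * (b - a) * hpa
  _ ≤ b ^ p := key

lemma abs_rpow_tangent {p : ℝ} (hp : 1 ≤ p) (s t : ℝ) :
    |s| ^ p + p * Real.sign s * |s| ^ (p - 1) * (t - s) ≤ |t| ^ p := by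
  have hp0 : (0:ℝ) < p := lt_of_lt_of_le one_pos hp
  rcases lt_trichotomy s 0 with hs | hs | hs
  · rw [Real.sign_of_neg hs, abs_of_neg hs]
    have key := rpow_tangent_nonneg hp (a := -s) (by linarith) |t| (abs_nonneg t)
    have h1 : p * (-s) ^ (p-1) * (s - t) ≤ p * (-s) ^ (p-1) * (|t| - -s) := by
      apply mul_le_mul_of_nonneg_left _ (mul_nonneg hp0.le (Real.rpow_nonneg (by linarith) _))
      have := neg_abs_le t; linarith
    nlinarith [key, h1]
  · simp [hs, Real.zero_rpow hp0.ne', Real.rpow_nonneg (abs_nonneg t) p]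
  · rw [Real.sign_of_pos hs, abs_of_pos hs]
    have key := rpow_tangent_nonneg hp hs |t| (abs_nonneg t)
    have h1 : p * s ^ (p-1) * (t - s) ≤ p * s ^ (p-1) * (|t| - s) := by
      apply mul_le_mul_of_nonneg_left _ (mul_nonneg hp0.le (Real.rpow_nonneg hs.le _))
      have := le_abs_self t; linarith
    nlinarith [key, h1]
open scoped ENNReal
open Filter

lemma sign_abs_rpow_mono {q : ℝ} (hq : 0 < q) :
    Monotone (fun x : ℝ => Real.sign x * |x| ^ q) := by
  intro x y hxy
  dsimp only
  rcases lt_trichotomy x 0 with hx | hx | hx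
  · rcases lt_trichotomy y 0 with hy | hy | hy
    · rw [Real.sign_of_neg hx, Real.sign_of_neg hy, abs_of_neg hx, abs_of_neg hy]
      simp only [neg_one_mul, neg_le_neg_iff]
      exact Real.rpow_le_rpow (by linarith) (by linarith) hq.le
    · subst hy
      rw [Real.sign_of_neg hx, Real.sign_zero]
      have := Real.rpow_nonneg (abs_nonneg x) q
      nlinarith
    · rw [Real.sign_of_neg hx, Real.sign_of_pos hy]
      have h1 := Real.rpow_nonneg (abs_nonneg x) q
      have h2 := Real.rpow_nonneg (abs_nonneg y) q
      nlinarith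
  · subst hx
    rcases lt_or_eq_of_le hxy with hy | hy
    · rw [Real.sign_zero, Real.sign_of_pos hy]
      have := Real.rpow_nonneg (abs_nonneg y) q
      nlinarith
    · rw [← hy]
  · have hy : 0 < y := lt_of_lt_of_le hx hxy
    rw [Real.sign_of_pos hx, Real.sign_of_pos hy, abs_of_pos hx, abs_of_pos hy]
    simpa using Real.rpow_le_rpow hx.le hxy hq.le

lemma sign_abs_rpow_cont {q : ℝ} (hq : 0 < q) :
    Continuous (fun x : ℝ => Real.sign x * |x| ^ q) := by
  have habs : Continuous (fun x : ℝ => |x| ^ q) := by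
    rw [continuous_iff_continuousAt]
    intro x
    exact (Real.continuousAt_rpow_const _ _ (Or.inr hq.le)).comp continuous_abs.continuousAt
  rw [continuous_iff_continuousAt]
  intro x
  rcases lt_trichotomy x 0 with hx | hx | hx
  · have hev : (fun x : ℝ => Real.sign x * |x| ^ q) =ᶠ[nhds x] fun x => -1 * |x| ^ q := by
      filter_upwards [Iio_mem_nhds hx] with z hz
      rw [Real.sign_of_neg hz]
    exact ContinuousAt.congr ((continuous_const.mul habs).continuousAt) hev.symm
  · subst hx
    have h0 : Real.sign (0:ℝ) * |(0:ℝ)| ^ q = 0 := by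
      simp [Real.zero_rpow hq.ne']
    rw [ContinuousAt, h0]
    apply squeeze_zero_norm (a := fun x : ℝ => |x| ^ q)
    · intro z
      rcases lt_trichotomy z 0 with hz | hz | hz
      · rw [Real.sign_of_neg hz]; simp [abs_of_nonneg (Real.rpow_nonneg (abs_nonneg z) q)]
      · simp [hz, Real.zero_rpow hq.ne']
      · rw [Real.sign_of_pos hz]; simp [abs_of_nonneg (Real.rpow_nonneg (abs_nonneg z) q)]
    · have : Tendsto (fun x : ℝ => |x| ^ q) (nhds 0) (nhds (|(0:ℝ)| ^ q)) :=
        habs.continuousAt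
      simpa [Real.zero_rpow hq.ne'] using this
  · have hev : (fun x : ℝ => Real.sign x * |x| ^ q) =ᶠ[nhds x] fun x => 1 * |x| ^ q := by
      filter_upwards [Ioi_mem_nhds hx] with z hz
      rw [Real.sign_of_pos hz]
    exact ContinuousAt.congr ((continuous_const.mul habs).continuousAt) hev.symm

noncomputable def scalarF (w p : ℝ) (x : ℝ) : ℝ :=
  x + w * p / 2 * (Real.sign x * |x| ^ (p - 1))

noncomputable def scalarS (w p : ℝ) : ℝ → ℝ :=
  if p = 1 then
    fun x => if w / 2 ≤ x then x - w / 2 else if x ≤ -(w / 2) then x + w / 2 else 0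
  else Function.invFun (scalarF w p)



lemma scalarF_strictMono {w p : ℝ} (hw : 0 ≤ w) (hp : 1 < p) : StrictMono (scalarF w p) := by
  have hmono : Monotone fun x : ℝ => w * p / 2 * (Real.sign x * |x| ^ (p - 1)) :=
    (sign_abs_rpow_mono (by linarith)).const_mul (by positivity)
  have := strictMono_id.add_monotone hmono
  exact this

lemma scalarF_surjective {w p : ℝ} (hw : 0 ≤ w) (hp : 1 < p) :
    Function.Surjective (scalarF w p) := by
  have hcont : Continuous (scalarF w p) := by
    unfold scalarF
    exact continuous_id.add (continuous_const.mul (sign_abs_rpow_cont (by linarith)))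
  apply hcont.surjective
  · apply tendsto_atTop_mono' _ _ tendsto_id
    filter_upwards [eventually_ge_atTop (0:ℝ)] with x hx
    simp only [id_eq]
    have h1 : 0 ≤ Real.sign x * |x| ^ (p - 1) := by
      have := sign_abs_rpow_mono (q := p - 1) (by linarith) hx
      simpa [Real.zero_rpow (by linarith : p - (1:ℝ) ≠ 0)] using this
    unfold scalarF
    nlinarith [mul_nonneg (by positivity : (0:ℝ) ≤ w * p / 2) h1]
  · apply tendsto_atBot_mono' _ _ tendsto_id
    filter_upwards [eventually_le_atBot (0:ℝ)] with x hx
    simp only [id_eq]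
    have h1 : Real.sign x * |x| ^ (p - 1) ≤ 0 := by
      have := sign_abs_rpow_mono (q := p - 1) (by linarith) hx
      simpa [Real.zero_rpow (by linarith : p - (1:ℝ) ≠ 0)] using this
    unfold scalarF
    nlinarith [mul_nonpos_of_nonneg_of_nonpos (by positivity : (0:ℝ) ≤ w * p / 2) h1]

lemma scalarF_scalarS {w p : ℝ} (hw : 0 ≤ w) (hp : 1 < p) (x : ℝ) :
    scalarF w p (scalarS w p x) = x := by
  rw [scalarS, if_neg (by linarith : p ≠ 1)]
  exact Function.invFun_eq (scalarF_surjective hw hp x)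

/-- The key variational inequality for the shrinkage function. -/
lemma scalarS_VI {w p : ℝ} (hw : 0 ≤ w) (hp1 : 1 ≤ p) (x t : ℝ) :
    (scalarS w p x - x) ^ 2 + w * |scalarS w p x| ^ p + (t - scalarS w p x) ^ 2 ≤
      (t - x) ^ 2 + w * |t| ^ p := by
  rcases eq_or_lt_of_le hp1 with hp | hp
  · -- p = 1
    subst hp
    simp only [scalarS, if_pos rfl, if_true, eq_self_iff_true, Real.rpow_one]
    set s := if w / 2 ≤ x then x - w / 2 else if x ≤ -(w / 2) then x + w / 2 else 0 with hs
    have key : w * |s| ≤ 2 * (t - s) * (s - x) + w * |t| := by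
      have ht1 := le_abs_self t
      have ht2 := neg_abs_le t
      rw [hs]
      split_ifs with h1 h2
      · rw [abs_of_nonneg (by linarith)]; nlinarith
      · rw [abs_of_nonpos (by linarith)]; nlinarith
      · push_neg at h1 h2
        rw [abs_zero]
        have hx1 : x < w / 2 := h1
        have hx2 : -(w/2) < x := h2
        rcases le_or_gt 0 t with ht | ht
        · rw [abs_of_nonneg ht] at *; nlinarith
        · rw [abs_of_neg ht] at *; nlinarith
    nlinarith [key]
  · -- 1 < p
    set s := scalarS w p x with hsdef
    have hFs : scalarF w p s = x := scalarF_scalarS hw hp x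
    have hsx : s - x = -(w * p / 2 * (Real.sign s * |s| ^ (p - 1))) := by
      rw [← hFs]; unfold scalarF; ring
    have htan := abs_rpow_tangent hp1 s t
    have hkey : w * (|s| ^ p + p * Real.sign s * |s| ^ (p-1) * (t - s)) ≤ w * |t| ^ p :=
      mul_le_mul_of_nonneg_left htan hw
    have h2 : (t - s) * (s - x) = -(w * p / 2 * (Real.sign s * |s| ^ (p - 1))) * (t - s) := by
      rw [hsx]; ring
    nlinarith [hkey, h2]

lemma scalarS_zero {w p : ℝ} (hw : 0 ≤ w) (hp1 : 1 ≤ p) : scalarS w p 0 = 0 := by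
  have h := scalarS_VI hw hp1 0 0
  have h0 : |(0:ℝ)| ^ p = 0 := by
    rw [abs_zero, Real.zero_rpow (by linarith : p ≠ 0)]
  rw [h0] at h
  have hnn : 0 ≤ w * |scalarS w p 0| ^ p :=
    mul_nonneg hw (Real.rpow_nonneg (abs_nonneg _) p)
  nlinarith [h, hnn]

lemma scalarS_lipschitz {w p : ℝ} (hw : 0 ≤ w) (hp1 : 1 ≤ p) (x y : ℝ) :
    |scalarS w p x - scalarS w p y| ≤ |x - y| := by
  set s := scalarS w p x
  set s' := scalarS w p y
  have h1 := scalarS_VI hw hp1 x s'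
  have h2 := scalarS_VI hw hp1 y s
  have key : (s - s') ^ 2 ≤ (s - s') * (x - y) := by nlinarith [h1, h2]
  have key2 : |s - s'| ^ 2 ≤ |s - s'| * |x - y| := by
    rw [sq_abs]
    calc (s - s') ^ 2 ≤ (s - s') * (x - y) := key
    _ ≤ |(s - s') * (x - y)| := le_abs_self _
    _ = |s - s'| * |x - y| := abs_mul _ _
  rcases eq_or_lt_of_le (abs_nonneg (s - s')) with h | h
  · rw [← h]; exact abs_nonneg _
  · nlinarith [key2, h]

lemma abs_scalarS_le {w p : ℝ} (hw : 0 ≤ w) (hp1 : 1 ≤ p) (x : ℝ) :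
    |scalarS w p x| ≤ |x| := by
  have := scalarS_lipschitz hw hp1 x 0
  rwa [scalarS_zero hw hp1, sub_zero, sub_zero] at this

noncomputable def shrinkOp {H : Type*} [NormedAddCommGroup H] [InnerProductSpace ℝ H]
    {Γ : Type*} (b : HilbertBasis Γ ℝ H) (w : Γ → ℝ) (p : ℝ) (h : H) : H :=
  ∑' γ, scalarS (w γ) p (b.repr h γ) • b γ

noncomputable def Phi {H H' : Type*} [NormedAddCommGroup H] [InnerProductSpace ℝ H]
    [NormedAddCommGroup H'] [InnerProductSpace ℝ H']
    {Γ : Type*} (K : H →L[ℝ] H') (g : H') (b : HilbertBasis Γ ℝ H)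
    (w : Γ → ℝ) (p : ℝ) (f : H) : ℝ≥0∞ :=
  ENNReal.ofReal (‖K f - g‖ ^ 2) + ∑' γ, ENNReal.ofReal (w γ * |b.repr f γ| ^ p)



section Hilbert
variable {H : Type*} [NormedAddCommGroup H] [InnerProductSpace ℝ H] [CompleteSpace H]
variable {Γ : Type*} (b : HilbertBasis Γ ℝ H)

lemma hasSum_repr_sq (x : H) : HasSum (fun γ => (b.repr x γ) ^ 2) (‖x‖ ^ 2) := by
  have h := lp.hasSum_norm (p := 2) (by norm_num) (b.repr x)
  have e1 : ∀ r : ℝ, ‖r‖ ^ ((2:ℝ≥0∞)).toReal = r ^ 2 := fun r => by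
    rw [show ((2:ℝ≥0∞)).toReal = ((2:ℕ):ℝ) by norm_num, Real.rpow_natCast,
      Real.norm_eq_abs, sq_abs]
  have e2 : ‖b.repr x‖ ^ ((2:ℝ≥0∞)).toReal = ‖x‖ ^ 2 := by
    rw [show ((2:ℝ≥0∞)).toReal = ((2:ℕ):ℝ) by norm_num, Real.rpow_natCast,
      b.repr.norm_map]
  rw [e2] at h
  simpa only [e1] using h

lemma summable_repr_sq (x : H) : Summable fun γ => (b.repr x γ) ^ 2 :=
  (hasSum_repr_sq b x).summable

lemma tsum_repr_sq (x : H) : ∑' γ, (b.repr x γ) ^ 2 = ‖x‖ ^ 2 :=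
  (hasSum_repr_sq b x).tsum_eq

variable (w : Γ → ℝ) (p : ℝ)

lemma shrink_repr (hw : ∀ γ, 0 ≤ w γ) (hp1 : 1 ≤ p) (h : H) (γ : Γ) :
    b.repr (shrinkOp b w p h) γ = scalarS (w γ) p (b.repr h γ) := by
  have hmem : Memℓp (fun γ => scalarS (w γ) p (b.repr h γ)) 2 := by
    apply memℓp_gen (p := 2)
    have hsum : Summable fun γ => (b.repr h γ) ^ 2 := summable_repr_sq b h
    apply Summable.of_nonneg_of_le (fun γ => by positivity) _ hsum
    intro γ
    have e : ‖scalarS (w γ) p (b.repr h γ)‖ ^ ((2:ℝ≥0∞)).toReal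
        = |scalarS (w γ) p (b.repr h γ)| ^ (2:ℕ) := by
      rw [show ((2:ℝ≥0∞)).toReal = ((2:ℕ):ℝ) by norm_num, Real.rpow_natCast,
        Real.norm_eq_abs]
    rw [e]
    have := abs_scalarS_le (hw γ) hp1 (b.repr h γ)
    calc |scalarS (w γ) p (b.repr h γ)| ^ 2 ≤ |b.repr h γ| ^ 2 := by
          apply pow_le_pow_left₀ (abs_nonneg _) this
    _ = (b.repr h γ) ^ 2 := sq_abs _
  set F : lp (fun _ : Γ => ℝ) 2 := ⟨fun γ => scalarS (w γ) p (b.repr h γ), hmem⟩ with hF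
  have hFapp : ∀ γ, F γ = scalarS (w γ) p (b.repr h γ) := fun γ => rfl
  have hsum := b.hasSum_repr_symm F
  have : shrinkOp b w p h = b.repr.symm F := by
    rw [shrinkOp, ← hsum.tsum_eq]
  rw [this, LinearIsometryEquiv.apply_symm_apply]

lemma shrink_nonexpansive (hw : ∀ γ, 0 ≤ w γ) (hp1 : 1 ≤ p) (h h' : H) :
    ‖shrinkOp b w p h - shrinkOp b w p h'‖ ≤ ‖h - h'‖ := by
  have hsq : ‖shrinkOp b w p h - shrinkOp b w p h'‖ ^ 2 ≤ ‖h - h'‖ ^ 2 := by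
    rw [← tsum_repr_sq b (shrinkOp b w p h - shrinkOp b w p h'),
      ← tsum_repr_sq b (h - h')]
    apply Summable.tsum_le_tsum _ (summable_repr_sq b _) (summable_repr_sq b _)
    intro γ
    simp only [map_sub, lp.coeFn_sub, Pi.sub_apply]
    rw [shrink_repr b w p hw hp1 h γ, shrink_repr b w p hw hp1 h' γ]
    have := scalarS_lipschitz (hw γ) hp1 (b.repr h γ) (b.repr h' γ)
    calc (scalarS (w γ) p (b.repr h γ) - scalarS (w γ) p (b.repr h' γ)) ^ 2
        = |scalarS (w γ) p (b.repr h γ) - scalarS (w γ) p (b.repr h' γ)| ^ 2 := (sq_abs _).symm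
    _ ≤ |b.repr h γ - b.repr h' γ| ^ 2 := pow_le_pow_left₀ (abs_nonneg _) this 2
    _ = (b.repr h γ - b.repr h' γ) ^ 2 := sq_abs _
  nlinarith [norm_nonneg (shrinkOp b w p h - shrinkOp b w p h'), norm_nonneg (h - h'), hsq]

lemma shrink_wp_summable (hw : ∀ γ, 0 ≤ w γ) (hp1 : 1 ≤ p) (h : H) :
    Summable fun γ => w γ * |b.repr (shrinkOp b w p h) γ| ^ p := by
  apply Summable.of_nonneg_of_le
    (fun γ => mul_nonneg (hw γ) (Real.rpow_nonneg (abs_nonneg _) p)) _ (summable_repr_sq b h)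
  intro γ
  rw [shrink_repr b w p hw hp1 h γ]
  have hVI := scalarS_VI (hw γ) hp1 (b.repr h γ) 0
  have h0 : |(0:ℝ)| ^ p = 0 := by rw [abs_zero, Real.zero_rpow (by linarith : p ≠ 0)]
  rw [h0] at hVI
  nlinarith [hVI]

lemma shrink_VI_sum (hw : ∀ γ, 0 ≤ w γ) (hp1 : 1 ≤ p) (h v : H)
    (hv : Summable fun γ => w γ * |b.repr v γ| ^ p) :
    ‖shrinkOp b w p h - h‖ ^ 2 + (∑' γ, w γ * |b.repr (shrinkOp b w p h) γ| ^ p)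
      + ‖v - shrinkOp b w p h‖ ^ 2
      ≤ ‖v - h‖ ^ 2 + ∑' γ, w γ * |b.repr v γ| ^ p := by
  set s := shrinkOp b w p h with hs
  have hrepr : ∀ γ, b.repr s γ = scalarS (w γ) p (b.repr h γ) := shrink_repr b w p hw hp1 h
  have hVI : ∀ γ, (b.repr (s - h) γ) ^ 2 + w γ * |b.repr s γ| ^ p + (b.repr (v - s) γ) ^ 2
      ≤ (b.repr (v - h) γ) ^ 2 + w γ * |b.repr v γ| ^ p := by
    intro γ
    simp only [map_sub, lp.coeFn_sub, Pi.sub_apply, hrepr γ]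
    exact scalarS_VI (hw γ) hp1 (b.repr h γ) (b.repr v γ)
  have S1 := summable_repr_sq b (s - h)
  have S2 : Summable fun γ => w γ * |b.repr s γ| ^ p := shrink_wp_summable b w p hw hp1 h
  have S3 := summable_repr_sq b (v - s)
  have S4 := summable_repr_sq b (v - h)
  have hL : ∑' γ, ((b.repr (s-h) γ) ^ 2 + w γ * |b.repr s γ| ^ p + (b.repr (v-s) γ) ^ 2)
      = ‖s - h‖ ^ 2 + (∑' γ, w γ * |b.repr s γ| ^ p) + ‖v - s‖ ^ 2 := by
    rw [Summable.tsum_add (S1.add S2) S3, Summable.tsum_add S1 S2, tsum_repr_sq, tsum_repr_sq]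
  have hR : ∑' γ, ((b.repr (v-h) γ) ^ 2 + w γ * |b.repr v γ| ^ p)
      = ‖v - h‖ ^ 2 + ∑' γ, w γ * |b.repr v γ| ^ p := by
    rw [Summable.tsum_add S4 hv, tsum_repr_sq]
  rw [← hL, ← hR]
  exact Summable.tsum_le_tsum hVI ((S1.add S2).add S3) (S4.add hv)

end Hilbert

section Op
variable {H H' : Type*} [NormedAddCommGroup H] [InnerProductSpace ℝ H] [CompleteSpace H]
  [NormedAddCommGroup H'] [InnerProductSpace ℝ H'] [CompleteSpace H']

lemma norm_sub_adjK_sq (K : H →L[ℝ] H') (hK : ‖K‖ ≤ 1) (u : H) :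
    ‖u - (ContinuousLinearMap.adjoint K) (K u)‖ ^ 2 ≤ ‖u‖ ^ 2 - ‖K u‖ ^ 2 := by
  have h1 := norm_sub_sq_real u ((ContinuousLinearMap.adjoint K) (K u))
  have h2 : (inner ℝ u ((ContinuousLinearMap.adjoint K) (K u)) : ℝ) = ‖K u‖ ^ 2 := by
    rw [ContinuousLinearMap.adjoint_inner_right, real_inner_self_eq_norm_sq]
  have h3 : ‖(ContinuousLinearMap.adjoint K) (K u)‖ ≤ ‖K u‖ := by
    calc ‖(ContinuousLinearMap.adjoint K) (K u)‖ ≤ ‖ContinuousLinearMap.adjoint K‖ * ‖K u‖ :=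
          ContinuousLinearMap.le_opNorm _ _
    _ = ‖K‖ * ‖K u‖ := by rw [ContinuousLinearMap.adjoint.norm_map]
    _ ≤ 1 * ‖K u‖ := mul_le_mul_of_nonneg_right hK (norm_nonneg _)
    _ = ‖K u‖ := one_mul _
  have h4 : ‖(ContinuousLinearMap.adjoint K) (K u)‖ ^ 2 ≤ ‖K u‖ ^ 2 :=
    pow_le_pow_left₀ (norm_nonneg _) h3 2
  nlinarith [h1, h2, h4]

lemma surrogate_identity (K : H →L[ℝ] H') (g : H') (a v : H) :
    ‖v - (a + (ContinuousLinearMap.adjoint K) (g - K a))‖ ^ 2 =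
      ‖v - a‖ ^ 2 - ‖K (v - a)‖ ^ 2 + ‖K v - g‖ ^ 2 - ‖K a - g‖ ^ 2
        + ‖(ContinuousLinearMap.adjoint K) (g - K a)‖ ^ 2 := by
  set d := v - a with hd
  set r := g - K a with hr
  set m := (ContinuousLinearMap.adjoint K) r with hm
  have e0 : v - (a + m) = d - m := by rw [hd]; abel
  have e1 : ‖d - m‖ ^ 2 = ‖d‖ ^ 2 - 2 * (inner ℝ d m : ℝ) + ‖m‖ ^ 2 := norm_sub_sq_real d m
  have e2 : (inner ℝ d m : ℝ) = inner ℝ (K d) r := by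
    rw [hm, ContinuousLinearMap.adjoint_inner_right]
  have e3 : K v - g = K d - r := by
    rw [hd, hr, map_sub]; abel
  have e4 : ‖K d - r‖ ^ 2 = ‖K d‖ ^ 2 - 2 * (inner ℝ (K d) r : ℝ) + ‖r‖ ^ 2 :=
    norm_sub_sq_real _ _
  have e5 : ‖K a - g‖ = ‖r‖ := by rw [hr, norm_sub_rev]
  rw [e0, e1, e2, e3, e4, e5]
  ring

end Op

lemma tendsto_of_sq_tendsto_zero {u : ℕ → ℝ} (hu : ∀ n, 0 ≤ u n)
    (h : Tendsto (fun n => u n ^ 2) atTop (nhds 0)) : Tendsto u atTop (nhds 0) := by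
  have h2 : Tendsto (fun n => Real.sqrt (u n ^ 2)) atTop (nhds (Real.sqrt 0)) :=
    (Real.continuous_sqrt.tendsto 0).comp h
  rw [Real.sqrt_zero] at h2
  have : (fun n => Real.sqrt (u n ^ 2)) = u := by
    funext n; exact Real.sqrt_sq (hu n)
  rwa [this] at h2

set_option maxHeartbeats 2000000 in
/-- If the thresholded Landweber iterates converge weakly to `f*`, then `‖K(fⁿ − f*)‖ → 0`. -/
theorem K_of_weakly_convergent_iterates_tendsto
    {H H' : Type*} [NormedAddCommGroup H] [InnerProductSpace ℝ H] [CompleteSpace H]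
    [NormedAddCommGroup H'] [InnerProductSpace ℝ H'] [CompleteSpace H']
    {Γ : Type*} (b : HilbertBasis Γ ℝ H)
    (K : H →L[ℝ] H') (hK : ‖K‖ < 1) (g : H')
    (p : ℝ) (hp1 : 1 ≤ p) (hp2 : p ≤ 2)
    (w : Γ → ℝ) (c : ℝ) (hc : 0 < c) (hw : ∀ γ, c ≤ w γ)
    (f : ℕ → H)
    (hf : ∀ n, f (n + 1) =
        shrinkOp b w p (f n + (ContinuousLinearMap.adjoint K) (g - K (f n))))
    (fstar : H)
    (hweak : ∀ x : H, Tendsto (fun n => (inner ℝ (f n) x : ℝ)) atTop (nhds (inner ℝ fstar x))) :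
    Tendsto (fun n => ‖K (f n - fstar)‖) atTop (nhds 0) := by
  classical
  have hw0 : ∀ γ, 0 ≤ w γ := fun γ => le_trans hc.le (hw γ)
  have hK1 : ‖K‖ ≤ 1 := hK.le
  set A := ContinuousLinearMap.adjoint K with hA
  -- summability of penalty terms for iterates n ≥ 1
  have hBsum : ∀ n : ℕ, Summable fun γ => w γ * |b.repr (f (n+1)) γ| ^ p := by
    intro n; rw [hf n]; exact shrink_wp_summable b w p hw0 hp1 _
  set φ : ℕ → ℝ := fun n => ‖K (f (n+1)) - g‖ ^ 2 + ∑' γ, w γ * |b.repr (f (n+1)) γ| ^ p with hφ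
  have hφnonneg : ∀ n, 0 ≤ φ n := fun n => add_nonneg (sq_nonneg _)
    (tsum_nonneg fun γ => mul_nonneg (hw0 γ) (Real.rpow_nonneg (abs_nonneg _) _))
  -- descent inequality
  have hdescent : ∀ n, φ (n+1) + ‖f (n+2) - f (n+1)‖ ^ 2 ≤ φ n := by
    intro n
    set a := f (n+1) with ha
    set h := a + A (g - K a) with hh
    have hs : f (n+2) = shrinkOp b w p h := hf (n+1)
    have hVI := shrink_VI_sum b w p hw0 hp1 h a (hBsum n)
    rw [← hs] at hVI
    have hid1 := surrogate_identity K g a (f (n+2))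
    have hid2 := surrogate_identity K g a a
    rw [← hh] at hid1 hid2
    rw [hid1] at hVI
    have hz : a - a = 0 := sub_self a
    rw [hz, map_zero, norm_zero] at hid2
    rw [hid2] at hVI
    have hKd : ‖K (f (n+2) - a)‖ ^ 2 ≤ ‖f (n+2) - a‖ ^ 2 := by
      have h1 : ‖K (f (n+2) - a)‖ ≤ ‖K‖ * ‖f (n+2) - a‖ := K.le_opNorm _
      have h2 : ‖K‖ * ‖f (n+2) - a‖ ≤ 1 * ‖f (n+2) - a‖ :=
        mul_le_mul_of_nonneg_right hK1 (norm_nonneg _)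
      nlinarith [norm_nonneg (K (f (n+2) - a)), norm_nonneg (f (n+2) - a)]
    have hrev : ‖a - f (n+2)‖ = ‖f (n+2) - a‖ := norm_sub_rev _ _
    rw [hrev] at hVI
    simp only [hφ]
    nlinarith [hVI, hKd]
  -- φ is antitone, bounded below, hence convergent; differences tend to 0
  have hφanti : Antitone φ := antitone_nat_of_succ_le fun n => by
    nlinarith [hdescent n, sq_nonneg ‖f (n+2) - f (n+1)‖]
  have hφbdd : BddBelow (Set.range φ) := ⟨0, by rintro x ⟨n, rfl⟩; exact hφnonneg n⟩
  have hφlim := tendsto_atTop_ciInf hφanti hφbdd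
  have hφdiff : Tendsto (fun n => φ n - φ (n+1)) atTop (nhds 0) := by
    have h2 := hφlim.sub (hφlim.comp (tendsto_add_atTop_nat 1))
    simpa using h2
  have hΔsq : Tendsto (fun n => ‖f (n+2) - f (n+1)‖ ^ 2) atTop (nhds 0) :=
    squeeze_zero (fun n => sq_nonneg _) (fun n => by linarith [hdescent n]) hφdiff
  have hΔ : Tendsto (fun n => ‖f (n+2) - f (n+1)‖) atTop (nhds 0) :=
    tendsto_of_sq_tendsto_zero (fun n => norm_nonneg _) hΔsq
  -- boundedness of the sequence
  have hbound : ∃ M, ∀ n, ‖f n - fstar‖ ≤ M := by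
    have hptwise : ∀ y : H, ∃ C, ∀ n, ‖(innerSL ℝ (f n)) y‖ ≤ C := by
      intro y
      have ht : Tendsto (fun n => ‖(inner ℝ (f n) y : ℝ)‖) atTop (nhds ‖(inner ℝ fstar y : ℝ)‖) :=
        (hweak y).norm
      obtain ⟨C, hC⟩ := ht.bddAbove_range
      refine ⟨C, fun n => ?_⟩
      exact hC ⟨n, rfl⟩
    obtain ⟨C, hC⟩ := banach_steinhaus hptwise
    refine ⟨C + ‖fstar‖, fun n => ?_⟩
    have h1 : ‖f n‖ ≤ C := by
      have := hC n
      rwa [innerSL_apply_norm] at this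
    calc ‖f n - fstar‖ ≤ ‖f n‖ + ‖fstar‖ := norm_sub_le _ _
    _ ≤ C + ‖fstar‖ := by linarith
  obtain ⟨M, hM⟩ := hbound
  -- the iteration map and its nonexpansiveness
  set T : H → H := fun x => shrinkOp b w p (x + A (g - K x)) with hT
  have hfT : ∀ n, f (n+1) = T (f n) := fun n => hf n
  have hTlip : ∀ x y : H, ‖T x - T y‖ ≤ ‖x - y‖ := by
    intro x y
    have h1 : ‖T x - T y‖ ≤ ‖(x + A (g - K x)) - (y + A (g - K y))‖ :=
      shrink_nonexpansive b w p hw0 hp1 _ _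
    have h2 : (x + A (g - K x)) - (y + A (g - K y)) = (x - y) - A (K (x - y)) := by
      simp only [map_sub]; abel
    rw [h2] at h1
    have h3 := norm_sub_adjK_sq K hK1 (x - y)
    nlinarith [norm_nonneg ((x - y) - A (K (x - y))), norm_nonneg (x - y),
      sq_nonneg ‖K (x - y)‖, h1, h3]
  -- the weak limit is a fixed point
  set q := T fstar with hq
  have hfix : T fstar = fstar := by
    have hkey : ∀ n, ‖fstar - q‖ ^ 2 ≤
        ‖f (n+2) - f (n+1)‖ ^ 2 + 2 * (‖f (n+2) - f (n+1)‖ * M)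
          - 2 * (inner ℝ (f (n+1) - fstar) (fstar - q) : ℝ) := by
      intro n
      have h1 : ‖f (n+2) - q‖ ≤ ‖f (n+1) - fstar‖ := by
        rw [hfT (n+1)]; exact hTlip (f (n+1)) fstar
      have h2 : ‖f (n+1) - q‖ ≤ ‖f (n+2) - f (n+1)‖ + ‖f (n+1) - fstar‖ := by
        calc ‖f (n+1) - q‖ ≤ ‖f (n+1) - f (n+2)‖ + ‖f (n+2) - q‖ := norm_sub_le_norm_sub_add_norm_sub _ _ _
        _ ≤ ‖f (n+2) - f (n+1)‖ + ‖f (n+1) - fstar‖ := by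
            rw [norm_sub_rev (f (n+1)) (f (n+2))]; linarith
      have h3 : f (n+1) - q = (f (n+1) - fstar) + (fstar - q) := by abel
      have h4 : ‖f (n+1) - q‖ ^ 2 = ‖f (n+1) - fstar‖ ^ 2
          + 2 * (inner ℝ (f (n+1) - fstar) (fstar - q) : ℝ) + ‖fstar - q‖ ^ 2 := by
        rw [h3]; exact norm_add_sq_real _ _
      have h5 : ‖f (n+1) - q‖ ^ 2 ≤ (‖f (n+2) - f (n+1)‖ + ‖f (n+1) - fstar‖) ^ 2 := by
        apply pow_le_pow_left₀ (norm_nonneg _) h2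
      have h6 : ‖f (n+1) - fstar‖ ≤ M := hM (n+1)
      nlinarith [h4, h5, norm_nonneg (f (n+2) - f (n+1)), norm_nonneg (f (n+1) - fstar)]
    have hinner : Tendsto (fun n => (inner ℝ (f (n+1) - fstar) (fstar - q) : ℝ)) atTop (nhds 0) := by
      have h1 := (hweak (fstar - q)).comp (tendsto_add_atTop_nat 1)
      have h2 : Tendsto (fun n => (inner ℝ (f (n+1)) (fstar - q) : ℝ)
          - (inner ℝ fstar (fstar - q) : ℝ)) atTop (nhds 0) := by
        have := h1.sub (tendsto_const_nhds (x := (inner ℝ fstar (fstar - q) : ℝ)))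
        simpa using this
      have h3 : (fun n => (inner ℝ (f (n+1) - fstar) (fstar - q) : ℝ))
          = fun n => (inner ℝ (f (n+1)) (fstar - q) : ℝ) - (inner ℝ fstar (fstar - q) : ℝ) := by
        funext n; rw [inner_sub_left]
      rw [h3]; exact h2
    have hclim : Tendsto (fun n => ‖f (n+2) - f (n+1)‖ ^ 2 + 2 * (‖f (n+2) - f (n+1)‖ * M)
        - 2 * (inner ℝ (f (n+1) - fstar) (fstar - q) : ℝ)) atTop (nhds 0) := by
      have h1 := (hΔsq.add ((hΔ.mul_const M).const_mul 2)).sub (hinner.const_mul 2)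
      simpa using h1
    have hle : ‖fstar - q‖ ^ 2 ≤ 0 := ge_of_tendsto' hclim fun n => hkey n
    have : ‖fstar - q‖ = 0 := by nlinarith [norm_nonneg (fstar - q)]
    have : fstar - q = 0 := norm_eq_zero.mp this
    have : q = fstar := by
      have := sub_eq_zero.mp this; exact this.symm
    exact this
  -- final descent argument
  have hsq : ∀ n, ‖K (f n - fstar)‖ ^ 2 ≤ ‖f n - fstar‖ ^ 2 - ‖f (n+1) - fstar‖ ^ 2 := by
    intro n
    have h0 : f (n+1) - fstar = T (f n) - T fstar := by rw [hfT n, hfix]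
    have h1 : ‖T (f n) - T fstar‖ ≤ ‖(f n + A (g - K (f n))) - (fstar + A (g - K fstar))‖ :=
      shrink_nonexpansive b w p hw0 hp1 _ _
    have h2 : (f n + A (g - K (f n))) - (fstar + A (g - K fstar))
        = (f n - fstar) - A (K (f n - fstar)) := by
      simp only [map_sub]; abel
    rw [h2] at h1
    have h3 := norm_sub_adjK_sq K hK1 (f n - fstar)
    have h4 : ‖f (n+1) - fstar‖ ≤ ‖(f n - fstar) - A (K (f n - fstar))‖ := by
      rw [h0]; exact h1
    nlinarith [pow_le_pow_left₀ (norm_nonneg _) h4 2, h3]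
  have hanti : Antitone fun n => ‖f n - fstar‖ := antitone_nat_of_succ_le fun n => by
    have := hsq n
    nlinarith [sq_nonneg ‖K (f n - fstar)‖, norm_nonneg (f n - fstar),
      norm_nonneg (f (n+1) - fstar)]
  have hbdd : BddBelow (Set.range fun n => ‖f n - fstar‖) :=
    ⟨0, by rintro x ⟨n, rfl⟩; exact norm_nonneg _⟩
  have hulim := tendsto_atTop_ciInf hanti hbdd
  have hulimsq : Tendsto (fun n => ‖f n - fstar‖ ^ 2) atTop
      (nhds ((⨅ n, ‖f n - fstar‖) ^ 2)) := hulim.pow 2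
  have hdiff : Tendsto (fun n => ‖f n - fstar‖ ^ 2 - ‖f (n+1) - fstar‖ ^ 2) atTop (nhds 0) := by
    have h2 := hulimsq.sub (hulimsq.comp (tendsto_add_atTop_nat 1))
    simpa using h2
  have hKsq : Tendsto (fun n => ‖K (f n - fstar)‖ ^ 2) atTop (nhds 0) :=
    squeeze_zero (fun n => sq_nonneg _) hsq hdiff
  exact tendsto_of_sq_tendsto_zero (fun n => norm_nonneg _) hKsq
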